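/- Let n ≥ 1 and let M ∈ Sp(2n) have the n×n block form M = [[A, B],[C, D]]. If −1 is not an eigenvalue of the matrix N M⁻¹ N M (equivalently, det(N M⁻¹ N M + I_{2n}) ≠ 0), then both A and D are invertible. -/
import Mathlib


open Matrix

/-- The standard symplectic matrix `J = [[0, -Iₙ], [Iₙ, 0]]` in `n × n` block form. -/
def Jmat (n : ℕ) : Matrix (Fin n ⊕ Fin n) (Fin n ⊕ Fin n) ℝ :=
  Matrix.fromBlocks 0 (-1) 1 0

/-- The matrix `N = [[-Iₙ, 0], [0, Iₙ]]` in `n × n` block form. -/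
def Nmat (n : ℕ) : Matrix (Fin n ⊕ Fin n) (Fin n ⊕ Fin n) ℝ :=
  Matrix.fromBlocks (-1) 0 0 1

theorem stmt_8 (n : ℕ) (hn : 1 ≤ n)
    (A B C D : Matrix (Fin n) (Fin n) ℝ)
    (M : Matrix (Fin n ⊕ Fin n) (Fin n ⊕ Fin n) ℝ)
    (hM : M = Matrix.fromBlocks A B C D)
    (hsp : Mᵀ * Jmat n * M = Jmat n)
    (hev : (Nmat n * M⁻¹ * Nmat n * M + 1).det ≠ 0) :
    IsUnit A ∧ IsUnit D := by
  have hJJ : Jmat n * Jmat n = -1 := by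
    simp [Jmat, Matrix.fromBlocks_multiply, ← Matrix.fromBlocks_one,
      Matrix.fromBlocks_neg]
  have hXM : (-(Jmat n) * Mᵀ * Jmat n) * M = 1 := by
    have h : (-(Jmat n) * Mᵀ * Jmat n) * M = -(Jmat n * (Mᵀ * Jmat n * M)) := by
      noncomm_ring
    rw [h, hsp, hJJ, neg_neg]
  have hinv : M⁻¹ = Matrix.fromBlocks Dᵀ (-Bᵀ) (-Cᵀ) Aᵀ := by
    rw [Matrix.inv_eq_left_inv hXM, hM]
    simp [Jmat, Matrix.fromBlocks_transpose, Matrix.fromBlocks_neg,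
      Matrix.fromBlocks_multiply]
  have hMinv : M⁻¹ * M = 1 := by
    rw [Matrix.inv_eq_left_inv hXM]; exact hXM
  have h1 : Nmat n * M⁻¹ * Nmat n = Matrix.fromBlocks Dᵀ Bᵀ Cᵀ Aᵀ := by
    rw [hinv]
    simp [Nmat, Matrix.fromBlocks_multiply]
  have hkey : Nmat n * M⁻¹ * Nmat n * M + 1 =
      Matrix.fromBlocks (Dᵀ + Dᵀ) 0 0 (Aᵀ + Aᵀ) * M := by
    rw [h1, ← hMinv, hinv, ← Matrix.add_mul]
    congr 1
    simp [Matrix.fromBlocks_add]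
  rw [hkey, Matrix.det_mul, Matrix.det_fromBlocks_zero₂₁] at hev
  have hD : (Dᵀ + Dᵀ).det ≠ 0 := fun h => hev (by rw [h]; ring)
  have hA : (Aᵀ + Aᵀ).det ≠ 0 := fun h => hev (by rw [h]; ring)
  have h2 : ∀ X : Matrix (Fin n) (Fin n) ℝ, (Xᵀ + Xᵀ).det ≠ 0 → IsUnit X := by
    intro X hX
    rw [Matrix.isUnit_iff_isUnit_det, isUnit_iff_ne_zero]
    intro h0
    apply hX
    have : Xᵀ + Xᵀ = (2 : ℝ) • Xᵀ := by rw [two_smul]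
    rw [this, Matrix.det_smul, Matrix.det_transpose, h0, mul_zero]
  exact ⟨h2 A hA, h2 D hD⟩
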